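/- arXiv:1409.0957 — 4 statements merged into one kernel-verified Lean document; each statement's English description precedes it below -/
import Mathlib

section
/- Let k > 0 and let f : ℝ → ℝ be a differentiable function satisfying f'(t) ≤ k - f(t)² for all t ∈ ℝ. Then |f(t)| ≤ √k for all t ∈ ℝ. -/
lemma riccati_upper_bound (k : ℝ) (hk : 0 < k) (f : ℝ → ℝ)
    (hf : Differentiable ℝ f)
    (hineq : ∀ t : ℝ, deriv f t ≤ k - (f t) ^ 2) :
    ∀ t : ℝ, f t ≤ Real.sqrt k := by
  intro t₀
  by_contra h
  push_neg at h
  set sk := Real.sqrt k with hsk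
  have hsk0 : 0 < sk := Real.sqrt_pos.mpr hk
  have hsk2 : sk ^ 2 = k := Real.sq_sqrt hk.le
  set a := f t₀ with ha
  -- Step 1: f t ≥ a for all t ≤ t₀
  have step1 : ∀ t ≤ t₀, a ≤ f t := by
    intro t₁ ht₁
    by_contra hlt
    push_neg at hlt
    have ht₁lt : t₁ < t₀ := lt_of_le_of_ne ht₁ (by rintro rfl; exact absurd rfl hlt.ne)
    set c := max (f t₁) ((sk + a) / 2) with hc
    have hskc : sk < c := lt_max_of_lt_right (by linarith)
    have hca : c < a := max_lt hlt (by linarith)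
    have hft₁c : f t₁ ≤ c := le_max_left _ _
    set S := Set.Icc t₁ t₀ ∩ f ⁻¹' Set.Iic c with hS
    have hScomp : IsCompact S :=
      isCompact_Icc.inter_right (isClosed_Iic.preimage hf.continuous)
    have hSne : S.Nonempty := ⟨t₁, ⟨le_refl _, ht₁lt.le⟩, hft₁c⟩
    set s := sSup S with hs
    have hsmem : s ∈ S := hScomp.sSup_mem hSne
    obtain ⟨⟨hst₁, hst₀⟩, hfs⟩ := hsmem
    have hfsc : f s ≤ c := hfs
    have hst₀' : s < t₀ := by
      rcases lt_or_eq_of_le hst₀ with h' | h'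
      · exact h'
      · exfalso; rw [h'] at hfsc; linarith
    have hgt : ∀ t ∈ Set.Ioc s t₀, c < f t := by
      rintro t ⟨hts, htt₀⟩
      by_contra hle
      push_neg at hle
      have : t ∈ S := ⟨⟨hst₁.trans hts.le, htt₀⟩, hle⟩
      exact absurd (le_csSup hScomp.bddAbove this) (not_le.mpr hts)
    have hanti : StrictAntiOn f (Set.Icc s t₀) := by
      apply strictAntiOn_of_deriv_neg (convex_Icc s t₀) hf.continuous.continuousOn
      intro x hx
      rw [interior_Icc] at hx
      have hcfx : c < f x := hgt x ⟨hx.1, hx.2.le⟩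
      have : c ^ 2 < f x ^ 2 := by nlinarith
      have hk' : k < c ^ 2 := by nlinarith
      calc deriv f x ≤ k - f x ^ 2 := hineq x
        _ < 0 := by nlinarith
    have : f t₀ < f s := hanti ⟨le_refl _, hst₀⟩ ⟨hst₀, le_refl _⟩ hst₀'
    have : a < c := lt_of_lt_of_le this hfs
    linarith
  have hask : sk < a := h
  -- Step 2: v = 1/(f - sk) has derivative ≥ 1 on (-∞, t₀]
  set v := fun t => (f t - sk)⁻¹ with hv
  have hvt₀ : 0 < v t₀ := by
    simp only [hv]
    exact inv_pos.mpr (by linarith)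
  set T := t₀ - (v t₀ + 1) with hT
  have hTlt : T < t₀ := by
    have := hvt₀; simp only [hT]; linarith
  have hpos : ∀ x ∈ Set.Icc T t₀, 0 < f x - sk := by
    intro x hx
    have := step1 x hx.2
    linarith
  have hcont : ContinuousOn v (Set.Icc T t₀) := by
    apply ContinuousOn.inv₀ (hf.continuous.sub continuous_const).continuousOn
    intro x hx; exact (hpos x hx).ne'
  have hderiv : ∀ x ∈ interior (Set.Icc T t₀), 1 ≤ deriv v x := by
    intro x hx
    rw [interior_Icc] at hx
    have hx' : x ∈ Set.Icc T t₀ := ⟨hx.1.le, hx.2.le⟩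
    have hne : f x - sk ≠ 0 := (hpos x hx').ne'
    have h1 : HasDerivAt (fun t => f t - sk) (deriv f x) x :=
      (hf x).hasDerivAt.sub_const sk
    have h2 : HasDerivAt v (-(deriv f x) / (f x - sk) ^ 2) x := h1.inv hne
    rw [h2.deriv]
    rw [le_div_iff₀ (by positivity)]
    have hfx : sk < f x := by have := hpos x hx'; linarith
    have := hineq x
    nlinarith [hsk2]
  have hdiff : DifferentiableOn ℝ v (interior (Set.Icc T t₀)) := by
    intro x hx
    rw [interior_Icc] at hx
    have hx' : x ∈ Set.Icc T t₀ := ⟨hx.1.le, hx.2.le⟩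
    exact (((hf x).sub_const sk).inv (hpos x hx').ne').differentiableWithinAt
  have key := Convex.mul_sub_le_image_sub_of_le_deriv (convex_Icc T t₀) hcont hdiff
    hderiv T ⟨le_refl _, hTlt.le⟩ t₀ ⟨hTlt.le, le_refl _⟩ hTlt.le
  -- key : 1 * (t₀ - T) ≤ v t₀ - v T
  have hvT : 0 < v T := inv_pos.mpr (hpos T ⟨le_refl _, hTlt.le⟩)
  simp only [one_mul, hT] at key
  linarith

theorem riccati_global_bound (k : ℝ) (hk : 0 < k) (f : ℝ → ℝ)
    (hf : Differentiable ℝ f)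
    (hineq : ∀ t : ℝ, deriv f t ≤ k - (f t) ^ 2) :
    ∀ t : ℝ, |f t| ≤ Real.sqrt k := by
  intro t
  rw [abs_le]
  constructor
  · -- lower bound via g t = -f(-t)
    set g := fun t => -f (-t) with hg
    have hgd : Differentiable ℝ g := (hf.comp (differentiable_neg)).neg
    have hgderiv : ∀ s : ℝ, deriv g s = deriv f (-s) := by
      intro s
      have h1 : HasDerivAt (fun t => f (-t)) (deriv f (-s) * (-1)) s :=
        ((hf (-s)).hasDerivAt).comp s (hasDerivAt_neg s)
      have h2 : HasDerivAt g (-(deriv f (-s) * (-1))) s := h1.neg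
      rw [h2.deriv]; ring
    have hgineq : ∀ s : ℝ, deriv g s ≤ k - (g s) ^ 2 := by
      intro s
      rw [hgderiv s]
      have := hineq (-s)
      simp only [hg]
      calc deriv f (-s) ≤ k - f (-s) ^ 2 := this
        _ = k - (-f (-s)) ^ 2 := by ring
    have := riccati_upper_bound k hk g hgd hgineq (-t)
    simp only [hg, neg_neg] at this
    linarith
  · exact riccati_upper_bound k hk f hf hineq t
end

section
/- Let k > 0, t₀ ∈ ℝ, t₁ > 0, and let f : ℝ → ℝ be differentiable with f'(t) ≤ k - f(t)² for all t, and f(t₀) = √k · coth(√k · t₁). Then for all t ∈ (-t₁, 0], f(t₀ + t) ≥ √k · coth(√k · (t₁ + t)). -/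
noncomputable def coth (x : ℝ) : ℝ := Real.cosh x / Real.sinh x

/-!
Reversing time, `x ↦ -f (t₀ - x)` is a subsolution of `y' = k - y²` and
`x ↦ -√k coth (√k (t₁ - x))` a solution with the same value at `0`, so it suffices to compare
forwards. If the right-hand side satisfies `F x y ≤ F x (v x) + K (y - v x)` above the solution
`v`, then `v + ε e^{(K+1)(x - x₁)}` is a strict supersolution, which the subsolution `u` cannot
cross; letting `ε → 0` gives `u ≤ v`. For `F x y = k - y²` one can take `K = -2 min v` over the
compact interval.
-/

open Set Real

theorem image_le_of_deriv_right_le_of_oneSidedLipschitz {F : ℝ → ℝ → ℝ} {u u' v : ℝ → ℝ}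
    {a b K : ℝ} (hu : ContinuousOn u (Icc a b))
    (hu' : ∀ x ∈ Ico a b, HasDerivWithinAt u (u' x) (Ici x) x)
    (hsub : ∀ x ∈ Ico a b, u' x ≤ F x (u x)) (hv : ContinuousOn v (Icc a b))
    (hv' : ∀ x ∈ Ico a b, HasDerivWithinAt v (F x (v x)) (Ici x) x)
    (hF : ∀ x ∈ Ico a b, ∀ y, v x < y → F x y ≤ F x (v x) + K * (y - v x))
    (ha : u a ≤ v a) : ∀ x ∈ Icc a b, u x ≤ v x := by
  intro x hx
  refine le_of_forall_pos_le_add fun ε hε => ?_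
  set δ : ℝ → ℝ := fun y => ε * exp ((K + 1) * (y - x)) with hδ
  have hδ_pos : ∀ y, 0 < δ y := fun y => by positivity
  have hδ' : ∀ y, HasDerivAt δ ((K + 1) * δ y) y := fun y => by
    refine ((((hasDerivAt_id y).sub_const x).const_mul (K + 1)).exp.const_mul ε).congr_deriv ?_
    simp only [hδ, id]; ring
  have hB := image_le_of_deriv_right_lt_deriv_boundary' hu hu'
    (B := fun y => v y + δ y) (B' := fun y => F y (v y) + (K + 1) * δ y)
    (by linarith [hδ_pos a]) (hv.add (continuous_const.mul (by fun_prop)).continuousOn)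
    (fun y hy => (hv' y hy).add (hδ' y).hasDerivWithinAt)
    (fun y hy hyB => by
      calc u' y ≤ F y (v y + δ y) := hyB ▸ hsub y hy
        _ ≤ F y (v y) + K * δ y := by
          simpa using hF y hy (v y + δ y) (by linarith [hδ_pos y])
        _ < F y (v y) + (K + 1) * δ y := by linarith [hδ_pos y]) hx
  simpa [hδ] using hB

theorem image_le_of_deriv_right_le_sub_sq {u u' v : ℝ → ℝ} {a b k : ℝ}
    (hu : ContinuousOn u (Icc a b))
    (hu' : ∀ x ∈ Ico a b, HasDerivWithinAt u (u' x) (Ici x) x)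
    (hsub : ∀ x ∈ Ico a b, u' x ≤ k - u x ^ 2) (hv : ContinuousOn v (Icc a b))
    (hv' : ∀ x ∈ Ico a b, HasDerivWithinAt v (k - v x ^ 2) (Ici x) x)
    (ha : u a ≤ v a) : ∀ x ∈ Icc a b, u x ≤ v x := by
  obtain ⟨m, hm⟩ := isCompact_Icc.bddBelow_image hv
  refine image_le_of_deriv_right_le_of_oneSidedLipschitz (F := fun _ y => k - y ^ 2)
    (K := -2 * m) hu hu' hsub hv hv' (fun x hx y hy => ?_) ha
  have hmx : m ≤ v x := hm (mem_image_of_mem v (Ico_subset_Icc_self hx))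
  nlinarith

theorem hasDerivAt_coth {y : ℝ} (hy : y ≠ 0) : HasDerivAt coth (1 - coth y ^ 2) y := by
  have hsinh : sinh y ≠ 0 := sinh_ne_zero.2 hy
  refine ((hasDerivAt_cosh y).div (hasDerivAt_sinh y) hsinh).congr_deriv ?_
  unfold coth
  field_simp

theorem hasDerivAt_sqrt_mul_coth {k s : ℝ} (hk : 0 < k) (hs : s ≠ 0) :
    HasDerivAt (fun s => √k * coth (√k * s)) (k - (√k * coth (√k * s)) ^ 2) s := by
  have hsk : √k ≠ 0 := (sqrt_pos.2 hk).ne'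
  refine (((hasDerivAt_coth (mul_ne_zero hsk hs)).comp s
    ((hasDerivAt_id s).const_mul √k)).const_mul √k).congr_deriv ?_
  linear_combination sq_sqrt hk.le

theorem riccati_comparison_general (k t₀ t₁ : ℝ) (hk : 0 < k)
    (f : ℝ → ℝ) (hf : Differentiable ℝ f)
    (hineq : ∀ t : ℝ, deriv f t ≤ k - (f t) ^ 2)
    (hinit : f t₀ = Real.sqrt k * coth (Real.sqrt k * t₁)) :
    ∀ t ∈ Set.Ioc (-t₁) (0 : ℝ),
      f (t₀ + t) ≥ Real.sqrt k * coth (Real.sqrt k * (t₁ + t)) := by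
  rintro t ⟨ht₁, ht₀⟩
  have hu : ∀ x, HasDerivAt (fun x => -f (t₀ - x)) (deriv f (t₀ - x)) x := fun x => by
    simpa using ((hf (t₀ - x)).hasDerivAt.comp_const_sub t₀ x).fun_neg
  have hv : ∀ x < t₁, HasDerivAt (fun x => -(√k * coth (√k * (t₁ - x))))
      (k - (-(√k * coth (√k * (t₁ - x)))) ^ 2) x := fun x hx => by
    simpa using ((hasDerivAt_sqrt_mul_coth hk (sub_pos.2 hx).ne').comp_const_sub t₁ x).fun_neg
  have hcomp := image_le_of_deriv_right_le_sub_sq (a := 0) (b := -t)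
    (fun x _ => (hu x).continuousAt.continuousWithinAt) (fun x _ => (hu x).hasDerivWithinAt)
    (fun x _ => by simpa using hineq (t₀ - x))
    (fun x hx => (hv x (by linarith [hx.2])).continuousAt.continuousWithinAt)
    (fun x hx => (hv x (by linarith [hx.2])).hasDerivWithinAt)
    (by simp [hinit]) (-t) ⟨by linarith, le_rfl⟩
  simpa [sub_neg_eq_add] using hcomp

theorem riccati_comparison (k t₀ t₁ : ℝ) (hk : 0 < k) (ht₁ : 0 < t₁)
    (f : ℝ → ℝ) (hf : Differentiable ℝ f)
    (hineq : ∀ t : ℝ, deriv f t ≤ k - (f t) ^ 2)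
    (hinit : f t₀ = Real.sqrt k * coth (Real.sqrt k * t₁)) :
    ∀ t ∈ Set.Ioc (-t₁) (0 : ℝ),
      f (t₀ + t) ≥ Real.sqrt k * coth (Real.sqrt k * (t₁ + t)) :=
  riccati_comparison_general k t₀ t₁ hk f hf hineq hinit
end

section
/- Let k > 0 and let f : ℝ → ℝ be differentiable with f'(t) ≤ k - f(t)² for all t ∈ ℝ. If f(t₀) > √k for some t₀, then a contradiction follows; i.e., no such f with f(t₀) > √k exists. -/
theorem riccati_no_large_value (k : ℝ) (hk : 0 < k) (f : ℝ → ℝ)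
    (hf : Differentiable ℝ f)
    (hineq : ∀ t : ℝ, deriv f t ≤ k - (f t) ^ 2)
    (t₀ : ℝ) (hbig : Real.sqrt k < f t₀) : False := by
  have hc0 : 0 < f t₀ := lt_of_le_of_lt (Real.sqrt_nonneg k) hbig
  have hkc : k < (f t₀) ^ 2 := (Real.sqrt_lt' hc0).mp hbig
  -- Step 1: f s ≥ f t₀ for all s ≤ t₀.
  have mono : ∀ s, s ≤ t₀ → f t₀ ≤ f s := by
    intro s hs
    by_contra hlt
    push_neg at hlt
    have hst : s < t₀ := by
      rcases hs.lt_or_eq with h | h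
      · exact h
      · subst h; exact absurd hlt (lt_irrefl _)
    set v : ℝ := (max (Real.sqrt k) (f s) + f t₀) / 2 with hvdef
    have hmax : max (Real.sqrt k) (f s) < f t₀ := max_lt hbig hlt
    have hv1 : Real.sqrt k < v := by
      have := le_max_left (Real.sqrt k) (f s); simp only [hvdef]; linarith
    have hv2 : f s < v := by
      have := le_max_right (Real.sqrt k) (f s); simp only [hvdef]; linarith
    have hvc : v < f t₀ := by simp only [hvdef]; linarith
    have hv0 : 0 < v := lt_of_le_of_lt (Real.sqrt_nonneg k) hv1
    have hkv : k < v ^ 2 := (Real.sqrt_lt' hv0).mp hv1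
    set S : Set ℝ := Set.Icc s t₀ ∩ f ⁻¹' Set.Iic v with hSdef
    have hSclosed : IsClosed S :=
      isClosed_Icc.inter (IsClosed.preimage hf.continuous isClosed_Iic)
    have hScompact : IsCompact S :=
      isCompact_Icc.of_isClosed_subset hSclosed Set.inter_subset_left
    have hSne : S.Nonempty := ⟨s, ⟨le_refl s, hs⟩, hv2.le⟩
    set u : ℝ := sSup S with hudef
    have huS : u ∈ S := hScompact.sSup_mem hSne
    obtain ⟨⟨hsu, hut⟩, hfu⟩ := huS
    have hfu' : f u ≤ v := hfu
    have hut' : u < t₀ := by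
      rcases hut.lt_or_eq with h | h
      · exact h
      · exact absurd (h ▸ hfu') (not_le.mpr hvc)
    have hbdd : BddAbove S := hScompact.bddAbove
    -- on (u, t₀], f > v
    have hgt : ∀ x ∈ Set.Ioc u t₀, v < f x := by
      intro x ⟨hux, hxt⟩
      by_contra hle
      push_neg at hle
      have hxS : x ∈ S := ⟨⟨le_trans hsu hux.le, hxt⟩, hle⟩
      exact absurd (le_csSup hbdd hxS) (not_le.mpr hux)
    -- f is antitone on [u, t₀]
    have hanti : AntitoneOn f (Set.Icc u t₀) := by
      apply antitoneOn_of_deriv_nonpos (convex_Icc u t₀) hf.continuous.continuousOn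
      · exact fun x _ => (hf x).differentiableWithinAt
      · intro x hx
        rw [interior_Icc] at hx
        have hfx : v < f x := hgt x ⟨hx.1, hx.2.le⟩
        have := hineq x
        nlinarith
    have : f t₀ ≤ f u := hanti ⟨le_refl u, hut⟩ ⟨hut, le_refl t₀⟩ hut
    linarith
  -- Step 2: blow-up of 1/f backward in time.
  set ε : ℝ := 1 - k / (f t₀) ^ 2 with hεdef
  have hc2 : (0:ℝ) < (f t₀) ^ 2 := by positivity
  have hε0 : 0 < ε := by
    have : k / (f t₀) ^ 2 < 1 := (div_lt_one hc2).mpr hkc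
    simp only [hεdef]; linarith
  set s : ℝ := t₀ - ((f t₀)⁻¹ + 1) / ε with hsdef
  have hs : s ≤ t₀ := by
    have h1 : (0:ℝ) < ((f t₀)⁻¹ + 1) / ε := by positivity
    simp only [hsdef]; linarith
  have hfpos : ∀ x ∈ Set.Icc s t₀, 0 < f x := fun x hx =>
    lt_of_lt_of_le hc0 (mono x hx.2)
  set g : ℝ → ℝ := fun t => (f t)⁻¹ - ε * t with hgdef
  have hmono : MonotoneOn g (Set.Icc s t₀) := by
    apply monotoneOn_of_deriv_nonneg (convex_Icc s t₀)
    · exact ContinuousOn.sub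
        (hf.continuous.continuousOn.inv₀ fun x hx => (hfpos x hx).ne')
        (continuous_const.mul continuous_id).continuousOn
    · intro x hx
      rw [interior_Icc] at hx
      have hx' : x ∈ Set.Icc s t₀ := ⟨hx.1.le, hx.2.le⟩
      have hne : f x ≠ 0 := (hfpos x hx').ne'
      exact (((hf x).hasDerivAt.inv hne).sub
        ((hasDerivAt_id x).const_mul ε)).differentiableAt.differentiableWithinAt
    · intro x hx
      rw [interior_Icc] at hx
      have hx' : x ∈ Set.Icc s t₀ := ⟨hx.1.le, hx.2.le⟩
      have hfx : f t₀ ≤ f x := mono x hx.2.le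
      have hfxpos : 0 < f x := hfpos x hx'
      have hne : f x ≠ 0 := hfxpos.ne'
      have hd : HasDerivAt g (-(deriv f x) / (f x) ^ 2 - ε * 1) x :=
        ((hf x).hasDerivAt.inv hne).sub ((hasDerivAt_id x).const_mul ε)
      rw [hd.deriv]
      have hfx2 : (0:ℝ) < (f x) ^ 2 := by positivity
      have hkey : ε * (f x) ^ 2 ≤ -(deriv f x) := by
        have h1 : (f t₀) ^ 2 ≤ (f x) ^ 2 := by nlinarith
        have h2 : k / (f t₀) ^ 2 * (f t₀) ^ 2 = k := div_mul_cancel₀ k hc2.ne'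
        have h3 : 0 < k / (f t₀) ^ 2 := by positivity
        have h4 := mul_le_mul_of_nonneg_left h1 h3.le
        have := hineq x
        simp only [hεdef]
        nlinarith
      have : ε ≤ -(deriv f x) / (f x) ^ 2 := (le_div_iff₀ hfx2).mpr hkey
      linarith
  have hss : s ∈ Set.Icc s t₀ := ⟨le_refl s, hs⟩
  have htt : t₀ ∈ Set.Icc s t₀ := ⟨hs, le_refl t₀⟩
  have := hmono hss htt hs
  simp only [hgdef] at this
  have hts : ε * (t₀ - s) = (f t₀)⁻¹ + 1 := by
    simp only [hsdef]
    field_simp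
    ring
  have hfs : 0 < (f s)⁻¹ := inv_pos.mpr (hfpos s hss)
  nlinarith
end

section
/- Let f : ℝ → ℝ be differentiable and g : (−t₁, 0] → ℝ differentiable with g' = k − g², f' ≤ k − f² on ℝ (restricted appropriately), and f(t₀) = g(0). Then f(t₀ + t) ≥ g(t) for all t ∈ (−t₁, 0]. -/
/-!
The difference `w = f (t₀ + ·) - g` vanishes at `0` and satisfies
`w' ≤ g² - f (t₀ + ·)² = -(f (t₀ + ·) + g) w`, whose coefficient is bounded on compact intervals.
A one-sided Grönwall argument, run backward in time, then keeps `w` nonnegative.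
-/

open Set Real

theorem image_nonneg_of_deriv_right_ge_mul {w w' c : ℝ → ℝ} {a b M : ℝ}
    (hw : ContinuousOn w (Icc a b)) (hw' : ∀ x ∈ Ico a b, HasDerivWithinAt w (w' x) (Ici x) x)
    (ha : 0 ≤ w a) (hc : ∀ x ∈ Ico a b, |c x| ≤ M) (hmul : ∀ x ∈ Ico a b, c x * w x ≤ w' x) :
    ∀ x ∈ Icc a b, 0 ≤ w x := by
  -- Where `w < 0` we have `(-w)' ≤ M (-w)`, so `-w` cannot reach the strict supersolution
  -- `ε e^{(M+1)(x-a)}` of `y' = M y`.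
  have barrier : ∀ ε > 0, ∀ x ∈ Icc a b, -w x ≤ ε * exp ((M + 1) * (x - a)) := by
    intro ε hε
    have hexp : ∀ x, HasDerivAt (fun x => ε * exp ((M + 1) * (x - a)))
        (ε * exp ((M + 1) * (x - a)) * (M + 1)) x := fun x => by
      simpa [mul_assoc] using
        ((((hasDerivAt_id x).sub_const a).const_mul (M + 1)).exp).const_mul ε
    refine image_le_of_deriv_right_lt_deriv_boundary' hw.neg (fun x hx => (hw' x hx).neg)
      (by rw [Pi.neg_apply, sub_self, mul_zero, exp_zero, mul_one]; linarith)
      (fun x _ => (hexp x).continuousAt.continuousWithinAt)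
      (fun x _ => (hexp x).hasDerivWithinAt) ?_
    intro x hx heq
    rw [← heq, Pi.neg_apply]
    have hwx : w x < 0 := by
      have := mul_pos hε (exp_pos ((M + 1) * (x - a)))
      rw [← heq, Pi.neg_apply] at this
      linarith
    have hcM : M * w x ≤ c x * w x :=
      mul_le_mul_of_nonpos_right ((le_abs_self _).trans (hc x hx)) hwx.le
    linarith [hmul x hx]
  intro x hx
  have hE : 0 < exp ((M + 1) * (x - a)) := exp_pos _
  refine neg_nonpos.mp (le_of_forall_pos_le_add fun δ hδ => ?_)
  calc -w x ≤ δ / exp ((M + 1) * (x - a)) * exp ((M + 1) * (x - a)) :=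
        barrier _ (by positivity) x hx
    _ = 0 + δ := by field_simp; ring

theorem image_nonneg_of_deriv_left_le_mul {w w' c : ℝ → ℝ} {a b M : ℝ}
    (hw : ContinuousOn w (Icc a b)) (hw' : ∀ x ∈ Ioc a b, HasDerivWithinAt w (w' x) (Iic x) x)
    (hb : 0 ≤ w b) (hc : ∀ x ∈ Ioc a b, |c x| ≤ M) (hmul : ∀ x ∈ Ioc a b, w' x ≤ c x * w x) :
    ∀ x ∈ Icc a b, 0 ≤ w x := by
  have hneg : ∀ {x}, x ∈ Ico (-b) (-a) → -x ∈ Ioc a b := fun hx =>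
    ⟨lt_neg_of_lt_neg hx.2, neg_le.mp hx.1⟩
  have hderiv : ∀ x ∈ Ico (-b) (-a),
      HasDerivWithinAt (fun x => w (-x)) (-w' (-x)) (Ici x) x := fun x hx =>
    ((hw' (-x) (hneg hx)).comp x (hasDerivAt_neg x).hasDerivWithinAt
      fun _ hy => neg_le_neg (mem_Ici.mp hy)).congr_deriv (by ring)
  have key := image_nonneg_of_deriv_right_ge_mul (c := fun x => -c (-x)) (M := M)
    (hw.comp continuousOn_neg fun x hx => ⟨le_neg.mp hx.2, neg_le.mp hx.1⟩) hderiv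
    (by simpa using hb) (fun x hx => by simpa using hc (-x) (hneg hx))
    (fun x hx => by simpa using hmul (-x) (hneg hx))
  intro x hx
  simpa using key (-x) ⟨neg_le_neg hx.2, neg_le_neg hx.1⟩

theorem riccati_backward_comparison_general (k t₀ t₁ : ℝ)
    (f g : ℝ → ℝ) (hf : Differentiable ℝ f)
    (hg : ∀ t ∈ Set.Ioc (-t₁) (0 : ℝ), HasDerivAt g (k - (g t) ^ 2) t)
    (hineq : ∀ t : ℝ, deriv f t ≤ k - (f t) ^ 2)
    (hinit : f t₀ = g 0) :
    ∀ t ∈ Set.Ioc (-t₁) (0 : ℝ), f (t₀ + t) ≥ g t := by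
  intro t ht
  have hsub : Icc t 0 ⊆ Ioc (-t₁) 0 := fun τ hτ => ⟨ht.1.trans_le hτ.1, hτ.2⟩
  have hf' : ∀ τ, HasDerivAt (fun τ => f (t₀ + τ)) (deriv f (t₀ + τ)) τ := fun τ =>
    (hf _).hasDerivAt.comp_const_add t₀ τ
  have hw' : ∀ τ ∈ Icc t 0, HasDerivAt (fun τ => f (t₀ + τ) - g τ)
      (deriv f (t₀ + τ) - (k - g τ ^ 2)) τ := fun τ hτ => (hf' τ).sub (hg τ (hsub hτ))
  have hc : ContinuousOn (fun τ => -(f (t₀ + τ) + g τ)) (Icc t 0) := fun τ hτ =>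
    ((hf' τ).continuousAt.add (hg τ (hsub hτ)).continuousAt).neg.continuousWithinAt
  obtain ⟨M, hM⟩ := isCompact_Icc.exists_bound_of_continuousOn hc
  have key := image_nonneg_of_deriv_left_le_mul
    (fun τ hτ => (hw' τ hτ).continuousAt.continuousWithinAt)
    (fun τ hτ => (hw' τ (Ioc_subset_Icc_self hτ)).hasDerivWithinAt)
    (by simp [hinit]) (fun τ hτ => hM τ (Ioc_subset_Icc_self hτ))
    (fun τ _ => by linarith [hineq (t₀ + τ), show g τ ^ 2 - f (t₀ + τ) ^ 2
      = -(f (t₀ + τ) + g τ) * (f (t₀ + τ) - g τ) by ring])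
    t ⟨le_rfl, ht.2⟩
  exact sub_nonneg.mp key

theorem riccati_backward_comparison (k t₀ t₁ : ℝ) (hk : 0 < k) (ht₁ : 0 < t₁)
    (f g : ℝ → ℝ) (hf : Differentiable ℝ f)
    (hg : ∀ t ∈ Set.Ioc (-t₁) (0 : ℝ), HasDerivAt g (k - (g t) ^ 2) t)
    (hineq : ∀ t : ℝ, deriv f t ≤ k - (f t) ^ 2)
    (hinit : f t₀ = g 0) :
    ∀ t ∈ Set.Ioc (-t₁) (0 : ℝ), f (t₀ + t) ≥ g t :=
  riccati_backward_comparison_general k t₀ t₁ f g hf hg hineq hinit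
end
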